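/- arXiv:2309.13993 — 2 statements merged into one kernel-verified Lean document; each statement's English description precedes it below -/
import Mathlib

section
/- Let π ∈ ℝ^k be the uniform distribution with entries 1/k, and let m ∈ [0,1]^{(2k-1)×k} consist of 2k-1 ζ-separated rows with disjoint index sets S, T of size k-1 each and one extra index. With C_{ST} = H(m[S]) · diag(π) · H(m[T])^T (a 2^{k-1}×2^{k-1} matrix whose (A,B) entry is Σ_j π_j ∏_{i∈A∪B} m_{ij}), if π_min = min_j π_j and each row of m is ζ-separated, then σ_k(C_{ST}) > (π_min/k)·(ζ/(2√5))^{2k-2}. -/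
open Matrix Finset

/-- Euclidean norm of a finitely-indexed real vector. -/
noncomputable def e2 {n : Type*} [Fintype n] (x : n → ℝ) : ℝ :=
  Real.sqrt (∑ i, x i ^ 2)

/-- The `j`-th largest singular value of a real matrix, via the Courant–Fischer
max–min characterization: the supremum over `j`-dimensional subspaces of the
infimum of `‖A x‖₂` over unit vectors `x` in the subspace. -/
noncomputable def sval {m' n : Type*} [Fintype m'] [Fintype n] (A : Matrix m' n ℝ) (j : ℕ) : ℝ :=
  ⨆ V : {V : Submodule ℝ (n → ℝ) // Module.finrank ℝ V = j},
    ⨅ x : {x : n → ℝ // x ∈ V.1 ∧ e2 x = 1}, e2 (A.mulVec x.1)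

/-- Hadamard extension: rows indexed by subsets `S ⊆ [n]`, entry `(S, j)` equal
to `∏ i ∈ S, m i j`. -/
noncomputable def hadamardExt {n k : ℕ} (m : Matrix (Fin n) (Fin k) ℝ) :
    Matrix (Finset (Fin n)) (Fin k) ℝ :=
  Matrix.of fun S j => ∏ i ∈ S, m i j

/-- The `L₂ → L₂` operator norm of a real matrix. -/
noncomputable def opN {m' n : Type*} [Fintype m'] [Fintype n] (A : Matrix m' n ℝ) : ℝ :=
  ⨆ x : {x : n → ℝ // e2 x = 1}, e2 (A.mulVec x.1)

/-!
Write `H_S` for the Hadamard extension of the rows in `S`, so that `C_{ST} = k⁻¹ H_S H_Tᵀ`.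
By induction on `|S|`, `(ζ²/2)^|S| ‖z‖² ≤ (|S| + 1) ‖H_S z‖²` for `z` supported on `|S| + 1`
columns: removing a row `i` and the column `j₀` where `|z|` is smallest, the vector
`w_j = (m_{ij} - m_{ij₀}) z_j` has `‖H_{S∖i} w‖² ≤ 2 ‖H_S z‖²` (as `H_{S∖i} w` is
`(H_S z)_{A ∪ i} - m_{ij₀} (H_S z)_A`) and `‖w‖² ≥ ζ² ‖z‖² |S| / (|S| + 1)` by separation.
So `‖H_S z‖ ≥ √c ‖z‖` and `‖H_T y‖ ≥ √c ‖y‖` with `c = (ζ²/2)^(k-1) / k`. On the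
`k`-dimensional range of `H_T`, a unit vector `x = H_T y` has `1 = ⟨H_Tᵀ x, y⟩`, hence
`‖H_Tᵀ x‖ ≥ √c` and `‖C x‖ ≥ c / k`; finally `(ζ / (2√5))^(2k-2) = (ζ²/20)^(k-1)`.
-/

section EuclideanNorm

variable {n : Type*} [Fintype n]

theorem e2_eq_norm (x : n → ℝ) : e2 x = ‖WithLp.toLp 2 x‖ := by
  simp [e2, EuclideanSpace.norm_eq]

theorem e2_nonneg (x : n → ℝ) : 0 ≤ e2 x := Real.sqrt_nonneg _

theorem e2_eq_zero {x : n → ℝ} : e2 x = 0 ↔ x = 0 := by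
  simp [e2_eq_norm]

theorem e2_smul (a : ℝ) (x : n → ℝ) : e2 (a • x) = |a| * e2 x := by
  simp [e2_eq_norm, WithLp.toLp_smul, norm_smul]

theorem dotProduct_self_eq_e2_sq (x : n → ℝ) : x ⬝ᵥ x = e2 x ^ 2 := by
  rw [e2, Real.sq_sqrt (sum_nonneg fun i _ => sq_nonneg (x i)), dotProduct]
  simp only [sq]

theorem dotProduct_le_e2_mul_e2 (x y : n → ℝ) : x ⬝ᵥ y ≤ e2 x * e2 y := by
  have := real_inner_le_norm (WithLp.toLp 2 y : EuclideanSpace ℝ n) (WithLp.toLp 2 x)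
  simpa [e2_eq_norm, EuclideanSpace.inner_eq_star_dotProduct, mul_comm] using this

theorem exists_e2_mulVec_le {m : Type*} [Fintype m] (A : Matrix m n ℝ) :
    ∃ C, ∀ x, e2 (A *ᵥ x) ≤ C * e2 x := by
  classical
  refine ⟨‖(toEuclideanLin A).toContinuousLinearMap‖, fun x => ?_⟩
  simpa [e2_eq_norm] using (toEuclideanLin A).toContinuousLinearMap.le_opNorm (WithLp.toLp 2 x)

theorem exists_mem_e2_eq_one {V : Submodule ℝ (n → ℝ)} (hV : V ≠ ⊥) : ∃ x ∈ V, e2 x = 1 := by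
  obtain ⟨x, hxV, hx⟩ := (Submodule.ne_bot_iff V).1 hV
  refine ⟨(e2 x)⁻¹ • x, V.smul_mem _ hxV, ?_⟩
  rw [e2_smul, abs_inv, abs_of_nonneg (e2_nonneg x), inv_mul_cancel₀ (mt e2_eq_zero.1 hx)]

end EuclideanNorm

theorem le_sval_of_forall_mem {m n : Type*} [Fintype m] [Fintype n] (A : Matrix m n ℝ) {j : ℕ}
    (hj : 0 < j) {V : Submodule ℝ (n → ℝ)} (hV : Module.finrank ℝ V = j) {c : ℝ}
    (h : ∀ x ∈ V, e2 x = 1 → c ≤ e2 (A *ᵥ x)) : c ≤ sval A j := by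
  obtain ⟨C, hC⟩ := exists_e2_mulVec_le A
  have hbdd : BddAbove (Set.range fun W : {W : Submodule ℝ (n → ℝ) // Module.finrank ℝ W = j} =>
      ⨅ x : {x : n → ℝ // x ∈ W.1 ∧ e2 x = 1}, e2 (A *ᵥ x.1)) := by
    refine ⟨max C 0, Set.forall_mem_range.2 fun W => ?_⟩
    rcases isEmpty_or_nonempty {x : n → ℝ // x ∈ W.1 ∧ e2 x = 1} with hW | ⟨⟨x, hxW, hx⟩⟩
    · rw [Real.iInf_of_isEmpty]
      exact le_max_right _ _
    · refine (ciInf_le ⟨0, by rintro _ ⟨y, rfl⟩; exact e2_nonneg _⟩ ⟨x, hxW, hx⟩).trans ?_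
      exact (hC x).trans (by rw [hx, mul_one]; exact le_max_left _ _)
  obtain ⟨x₀, hx₀V, hx₀⟩ := exists_mem_e2_eq_one (V := V) <| by
    rintro rfl
    rw [finrank_bot] at hV
    omega
  have : Nonempty {x : n → ℝ // x ∈ V ∧ e2 x = 1} := ⟨⟨x₀, hx₀V, hx₀⟩⟩
  have hinf : c ≤ ⨅ x : {x : n → ℝ // x ∈ V ∧ e2 x = 1}, e2 (A *ᵥ x.1) :=
    le_ciInf fun x => h x.1 x.2.1 x.2.2
  exact hinf.trans (le_ciSup hbdd ⟨V, hV⟩)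

theorem mul_le_sval_mul_transpose {α β κ : Type*} [Fintype α] [Fintype β] [Fintype κ]
    [Nonempty κ] (G : Matrix α κ ℝ) (H : Matrix β κ ℝ) {a b : ℝ} (ha : 0 ≤ a) (hb : 0 < b)
    (hG : ∀ z, a * e2 z ≤ e2 (G *ᵥ z)) (hH : ∀ y, b * e2 y ≤ e2 (H *ᵥ y)) :
    a * b ≤ sval (G * Hᵀ) (Fintype.card κ) := by
  have hinj : Function.Injective H.mulVecLin := by
    refine (injective_iff_map_eq_zero _).2 fun y hy => e2_eq_zero.1 ?_
    have := hH y
    rw [mulVecLin_apply] at hy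
    rw [hy, e2_eq_zero.2 rfl] at this
    nlinarith [e2_nonneg y]
  refine le_sval_of_forall_mem _ Fintype.card_pos (V := LinearMap.range H.mulVecLin) ?_ ?_
  · rw [LinearMap.finrank_range_of_inj hinj, Module.finrank_fintype_fun_eq_card]
  rintro _ ⟨y, rfl⟩ hx
  rw [mulVecLin_apply] at hx ⊢
  set x := H *ᵥ y
  have hdot : 1 ≤ e2 (Hᵀ *ᵥ x) * e2 y :=
    calc 1 = x ⬝ᵥ (H *ᵥ y) := by rw [dotProduct_self_eq_e2_sq, hx, one_pow]
      _ = (Hᵀ *ᵥ x) ⬝ᵥ y := by rw [dotProduct_mulVec, mulVec_transpose]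
      _ ≤ e2 (Hᵀ *ᵥ x) * e2 y := dotProduct_le_e2_mul_e2 _ _
  have hg : b ≤ e2 (Hᵀ *ᵥ x) := by nlinarith [hH y, e2_nonneg (Hᵀ *ᵥ x)]
  calc a * b ≤ a * e2 (Hᵀ *ᵥ x) := by gcongr
    _ ≤ e2 ((G * Hᵀ) *ᵥ x) := by rw [← mulVec_mulVec]; exact hG _

theorem card_sub_one_mul_sum_le_card_mul_sum_erase {κ : Type*} [DecidableEq κ] {J : Finset κ}
    {f : κ → ℝ} {j₀ : κ} (hj₀ : j₀ ∈ J) (hmin : ∀ j ∈ J, f j₀ ≤ f j) :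
    ((#J : ℝ) - 1) * ∑ j ∈ J, f j ≤ #J * ∑ j ∈ J.erase j₀, f j := by
  have h := card_nsmul_le_sum (J.erase j₀) f (f j₀) fun j hj => hmin j (mem_of_mem_erase hj)
  rw [card_erase_of_mem hj₀, nsmul_eq_mul, Nat.cast_pred (card_pos.2 ⟨j₀, hj₀⟩)] at h
  rw [← add_sum_erase J f hj₀]
  linear_combination h

theorem sq_mul_sum_sq_le_sum_sq_mul {κ : Type*} {s : Finset κ} {g z : κ → ℝ} {ζ : ℝ}
    (hζ : 0 ≤ ζ) (hg : ∀ j ∈ s, ζ ≤ |g j|) :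
    ζ ^ 2 * ∑ j ∈ s, z j ^ 2 ≤ ∑ j ∈ s, (g j * z j) ^ 2 := by
  rw [mul_sum]
  refine sum_le_sum fun j hj => ?_
  rw [mul_pow, ← sq_abs (g j)]
  exact mul_le_mul_of_nonneg_right (pow_le_pow_left₀ hζ (hg j hj) 2) (sq_nonneg _)

section Hadamard

variable {ι κ : Type*} [DecidableEq ι] (m : Matrix ι κ ℝ)

theorem sum_powerset_sq_sub_mul_le {S : Finset ι} {i : ι} (hi : i ∉ S) (J : Finset κ)
    (z : κ → ℝ) {j₀ : κ} (hm : |m i j₀| ≤ 1) :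
    ∑ A ∈ S.powerset, (∑ j ∈ J, (m i j - m i j₀) * z j * ∏ i' ∈ A, m i' j) ^ 2 ≤
      2 * ∑ A ∈ (insert i S).powerset, (∑ j ∈ J, z j * ∏ i' ∈ A, m i' j) ^ 2 := by
  rw [sum_powerset_insert hi, mul_add, mul_sum, mul_sum, ← sum_add_distrib]
  refine sum_le_sum fun A hA => ?_
  have hiA : i ∉ A := fun h => hi (mem_powerset.1 hA h)
  set a := ∑ j ∈ J, z j * ∏ i' ∈ A, m i' j
  set b := ∑ j ∈ J, z j * ∏ i' ∈ insert i A, m i' j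
  have hab : ∑ j ∈ J, (m i j - m i j₀) * z j * ∏ i' ∈ A, m i' j = b - m i j₀ * a := by
    simp only [a, b, mul_sum, ← sum_sub_distrib, prod_insert hiA]
    exact sum_congr rfl fun j _ => by ring
  have hm2 : m i j₀ ^ 2 ≤ 1 := by nlinarith [abs_nonneg (m i j₀), sq_abs (m i j₀)]
  rw [hab]
  nlinarith [sq_nonneg (m i j₀ * a + b), mul_nonneg (sub_nonneg.2 hm2) (sq_nonneg a)]

theorem pow_mul_sum_sq_le_card_mul_sum_powerset [DecidableEq κ] {ζ : ℝ} (hζ : 0 ≤ ζ)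
    (S : Finset ι) : ∀ (J : Finset κ), #J = #S + 1 →
      (∀ i ∈ S, ∀ j ∈ J, |m i j| ≤ 1) →
      (∀ i ∈ S, ∀ j ∈ J, ∀ j' ∈ J, j ≠ j' → ζ ≤ |m i j - m i j'|) → ∀ z : κ → ℝ,
      (ζ ^ 2 / 2) ^ #S * ∑ j ∈ J, z j ^ 2 ≤
        #J * ∑ A ∈ S.powerset, (∑ j ∈ J, z j * ∏ i ∈ A, m i j) ^ 2 := by
  induction S using Finset.induction_on with
  | empty =>
    intro J hJ _ _ z
    obtain ⟨j₀, rfl⟩ := card_eq_one.1 hJ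
    simp
  | insert i S hi ih =>
    intro J hJ hm hsep z
    rw [card_insert_of_notMem hi] at hJ ⊢
    obtain ⟨j₀, hj₀, hmin⟩ := exists_min_image J (fun j => z j ^ 2) (card_pos.1 (by omega))
    set w : κ → ℝ := fun j => (m i j - m i j₀) * z j
    have hih : (ζ ^ 2 / 2) ^ #S * ∑ j ∈ J.erase j₀, w j ^ 2 ≤
        (#S + 1) * ∑ A ∈ S.powerset, (∑ j ∈ J, w j * ∏ i' ∈ A, m i' j) ^ 2 := by
      have h := ih (J.erase j₀) (by rw [card_erase_of_mem hj₀]; omega)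
        (fun i' hi' j hj => hm i' (mem_insert_of_mem hi') j (mem_of_mem_erase hj))
        (fun i' hi' j hj j' hj' => hsep i' (mem_insert_of_mem hi') j (mem_of_mem_erase hj) j'
          (mem_of_mem_erase hj'))
        w
      have hw₀ : ∀ A : Finset ι, ∑ j ∈ J.erase j₀, w j * ∏ i' ∈ A, m i' j =
          ∑ j ∈ J, w j * ∏ i' ∈ A, m i' j := fun A => sum_erase J (by simp [w])
      simp only [hw₀] at h
      rwa [card_erase_of_mem hj₀, hJ, Nat.add_sub_cancel, Nat.cast_add_one] at h
    have hwz : ζ ^ 2 * ∑ j ∈ J.erase j₀, z j ^ 2 ≤ ∑ j ∈ J.erase j₀, w j ^ 2 :=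
      sq_mul_sum_sq_le_sum_sq_mul hζ fun j hj => hsep i (mem_insert_self i S) j
        (mem_of_mem_erase hj) j₀ hj₀ (ne_of_mem_erase hj)
    have hz_erase := card_sub_one_mul_sum_le_card_mul_sum_erase (f := fun j => z j ^ 2) hj₀ hmin
    have hshift : ∑ A ∈ S.powerset, (∑ j ∈ J, w j * ∏ i' ∈ A, m i' j) ^ 2 ≤
        2 * ∑ A ∈ (insert i S).powerset, (∑ j ∈ J, z j * ∏ i' ∈ A, m i' j) ^ 2 :=
      sum_powerset_sq_sub_mul_le m hi J z (hm i (mem_insert_self i S) j₀ hj₀)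
    rw [hJ] at hz_erase ⊢
    push_cast at hz_erase ⊢
    rw [add_sub_cancel_right] at hz_erase
    refine le_of_mul_le_mul_left ?_ (by positivity : (0 : ℝ) < #S + 1)
    calc ((#S : ℝ) + 1) * ((ζ ^ 2 / 2) ^ (#S + 1) * ∑ j ∈ J, z j ^ 2)
        = (ζ ^ 2 / 2) ^ #S / 2 * ζ ^ 2 * ((#S + 1) * ∑ j ∈ J, z j ^ 2) := by ring
      _ ≤ (ζ ^ 2 / 2) ^ #S / 2 * ζ ^ 2 * ((#S + 1 + 1) * ∑ j ∈ J.erase j₀, z j ^ 2) := by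
        gcongr
      _ = (#S + 1 + 1) / 2 * ((ζ ^ 2 / 2) ^ #S * (ζ ^ 2 * ∑ j ∈ J.erase j₀, z j ^ 2)) := by ring
      _ ≤ (#S + 1 + 1) / 2 * ((#S + 1) * (2 * ∑ A ∈ (insert i S).powerset,
          (∑ j ∈ J, z j * ∏ i' ∈ A, m i' j) ^ 2)) := by
        refine mul_le_mul_of_nonneg_left ?_ (by positivity)
        exact (mul_le_mul_of_nonneg_left hwz (by positivity)).trans
          (hih.trans (mul_le_mul_of_nonneg_left hshift (by positivity)))
      _ = _ := by ring

end Hadamard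

noncomputable def hadamardExtOn {n k : ℕ} (m : Matrix (Fin n) (Fin k) ℝ) (S : Finset (Fin n)) :
    Matrix {A : Finset (Fin n) // A ⊆ S} (Fin k) ℝ :=
  (hadamardExt m).submatrix Subtype.val id

theorem sqrt_mul_e2_le_e2_hadamardExtOn {n k : ℕ} (m : Matrix (Fin n) (Fin k) ℝ)
    {S : Finset (Fin n)} (hS : #S + 1 = k) {ζ : ℝ} (hζ : 0 ≤ ζ) (hm : ∀ i ∈ S, ∀ j, |m i j| ≤ 1)
    (hsep : ∀ i ∈ S, ∀ j j', j ≠ j' → ζ ≤ |m i j - m i j'|) (z : Fin k → ℝ) :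
    √((ζ ^ 2 / 2) ^ #S / k) * e2 z ≤ e2 (hadamardExtOn m S *ᵥ z) := by
  have h := pow_mul_sum_sq_le_card_mul_sum_powerset m hζ S univ (by simp [hS])
    (fun i hi j _ => hm i hi j) (fun i hi j _ j' _ => hsep i hi j j') z
  rw [card_univ, Fintype.card_fin, sum_subtype S.powerset (p := (· ⊆ S)) fun _ => mem_powerset]
    at h
  have hk : (0 : ℝ) < k := by rw [← hS]; positivity
  rw [e2, e2, ← Real.sqrt_mul (by positivity)]
  refine Real.sqrt_le_sqrt ?_
  rw [div_mul_eq_mul_div, div_le_iff₀ hk, mul_comm _ (k : ℝ)]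
  refine h.trans_eq (congrArg _ (sum_congr rfl fun A _ => ?_))
  simp [hadamardExtOn, hadamardExt, mulVec, dotProduct, mul_comm]

theorem pow_div_two_mul_sqrt_five_lt {ζ : ℝ} (hζ : 0 < ζ) {k : ℕ} (hk : 2 ≤ k) :
    (ζ / (2 * √5)) ^ (2 * k - 2) < (ζ ^ 2 / 2) ^ (k - 1) := by
  have h20 : (ζ / (2 * √5)) ^ 2 = ζ ^ 2 / 20 := by
    rw [div_pow, mul_pow, Real.sq_sqrt (by norm_num)]; norm_num
  rw [show 2 * k - 2 = 2 * (k - 1) by omega, pow_mul, h20]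
  gcongr
  · omega
  · linarith [pow_pos hζ 2]

theorem smul_hadamardExtOn_mul_transpose {n k : ℕ} (m : Matrix (Fin n) (Fin k) ℝ)
    {S T : Finset (Fin n)} (hST : Disjoint S T) (r : ℝ) :
    (r • hadamardExtOn m S) * (hadamardExtOn m T)ᵀ =
      Matrix.of fun A B => ∑ j, r * ∏ i ∈ A.1 ∪ B.1, m i j := by
  ext A B
  simp [mul_apply, hadamardExtOn, hadamardExt, prod_union (hST.mono A.2 B.2), mul_assoc]

/-- with uniform mixing weights π_j = 1/k and disjoint sets S, T of
k-1 ζ-separated rows each, the matrix C_{ST} with (A,B) entry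
Σ_j (1/k) ∏_{i∈A∪B} m_{ij} satisfies σ_k(C_{ST}) > ((1/k)/k)·(ζ/(2√5))^{2k-2}. -/
theorem stmt8 (k : ℕ) (hk : 2 ≤ k) (ζ : ℝ) (hζ : 0 < ζ)
    (m : Matrix (Fin (2 * k - 1)) (Fin k) ℝ)
    (hm : ∀ i j, m i j ∈ Set.Icc (0 : ℝ) 1)
    (hsep : ∀ i, ∀ j j' : Fin k, j ≠ j' → ζ ≤ |m i j - m i j'|)
    (S T : Finset (Fin (2 * k - 1))) (hST : Disjoint S T)
    (hS : S.card = k - 1) (hT : T.card = k - 1) :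
    ((1 / (k : ℝ)) / k) * (ζ / (2 * Real.sqrt 5)) ^ (2 * k - 2) <
      sval (Matrix.of fun (A : {A : Finset (Fin (2 * k - 1)) // A ⊆ S})
          (B : {B : Finset (Fin (2 * k - 1)) // B ⊆ T}) =>
        ∑ j : Fin k, (1 / (k : ℝ)) * ∏ i ∈ A.1 ∪ B.1, m i j) k := by
  have hk0 : (0 : ℝ) < k := by positivity
  have hm' : ∀ i j, |m i j| ≤ 1 := fun i j => abs_le.2 ⟨by linarith [(hm i j).1], (hm i j).2⟩
  set c := (ζ ^ 2 / 2) ^ (k - 1) / (k : ℝ)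
  have hHS := sqrt_mul_e2_le_e2_hadamardExtOn m (S := S) (by omega) hζ.le (fun i _ => hm' i)
    (fun i _ => hsep i)
  have hHT := sqrt_mul_e2_le_e2_hadamardExtOn m (S := T) (by omega) hζ.le (fun i _ => hm' i)
    (fun i _ => hsep i)
  rw [hS] at hHS
  rw [hT] at hHT
  have hG : ∀ z, √c / k * e2 z ≤ e2 (((1 / (k : ℝ)) • hadamardExtOn m S) *ᵥ z) := fun z => by
    rw [smul_mulVec, e2_smul, abs_of_pos (by positivity), div_mul_eq_mul_div,
      one_div_mul_eq_div]
    exact div_le_div_of_nonneg_right (hHS z) hk0.le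
  have : Nonempty (Fin k) := ⟨⟨0, by omega⟩⟩
  have hsv := mul_le_sval_mul_transpose _ _ (by positivity) (by positivity) hG hHT
  rw [Fintype.card_fin, smul_hadamardExtOn_mul_transpose m hST, div_mul_eq_mul_div,
    Real.mul_self_sqrt (by positivity)] at hsv
  refine lt_of_lt_of_le ?_ hsv
  calc 1 / (k : ℝ) / k * (ζ / (2 * √5)) ^ (2 * k - 2)
      < 1 / (k : ℝ) / k * (ζ ^ 2 / 2) ^ (k - 1) :=
        mul_lt_mul_of_pos_left (pow_div_two_mul_sqrt_five_lt hζ hk) (by positivity)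
    _ = c / k := by ring
end

section
/- Let k ≥ 2, ζ > 0, π_min > 0, ε > 0 with ε < min{π_min/(4√k), ζ}. Let (π, m) be a model with π ∈ Δ^{k-1}, min_j π_j ≥ π_min, m ∈ [0,1]^{n×k} with all rows ζ-separated, and suppose σ = σ_k(H(m)) < 1/2. Then there exists a probability vector π̂ with min_j π̂_j ≥ π_min/4 such that min over permutations ρ of max{max_j |π_j - π̂_{ρ(j)}|, max_{i,j}|m_{ij} - m_{i,ρ(j)}|} > ε, yet ‖H(m)π - H(m)π̂‖_∞ ≤ 4kσ·ε. -/
open Matrix Finset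

/-!
Take a unit vector `α` with `‖H(m) α‖₂ ≤ σ`. The row of `H(m)` indexed by `∅` is all ones, so
`|∑ α| ≤ σ`, and `β = α - (∑ α) e₁` has total mass zero, `‖β‖₂ ≥ 1 - σ > 1/2` and
`‖H(m) β‖_∞ ≤ 2σ`. Moving `π` by `2√k ε β` keeps it a probability vector above `π_min / 4` and
moves the statistics by at most `4√k σ ε`. Some coordinate of `β` exceeds `1 / (2√k)`, so the
identity labelling sees a weight move by more than `ε`, while any other labelling moves a row of
`m` by at least `ζ > ε`.
-/

section e2

variable {ι : Type*} [Fintype ι]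

lemma e2_eq_norm_toLp (x : ι → ℝ) : e2 x = ‖WithLp.toLp 2 x‖ := by
  simp [EuclideanSpace.norm_eq, e2]

lemma abs_le_e2 (x : ι → ℝ) (i : ι) : |x i| ≤ e2 x := by
  rw [← Real.sqrt_sq_eq_abs]
  exact Real.sqrt_le_sqrt (single_le_sum (fun j _ => sq_nonneg (x j)) (mem_univ i))

lemma e2_sub_e2_le (x y : ι → ℝ) : e2 x - e2 y ≤ e2 (x - y) := by
  simpa only [e2_eq_norm_toLp, WithLp.toLp_sub] using norm_sub_norm_le _ _

lemma e2_single [DecidableEq ι] (i : ι) (a : ℝ) : e2 (Pi.single i a) = |a| := by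
  rw [e2, ← Real.sqrt_sq_eq_abs]
  congr 1
  rw [sum_eq_single i (fun j _ hj => by simp [hj]) (by simp)]
  simp

lemma exists_div_sqrt_card_lt_abs {x : ι → ℝ} {r : ℝ} (hr : 0 ≤ r) (hx : r < e2 x) :
    ∃ i, r / √(Fintype.card ι) < |x i| := by
  have hsq : r ^ 2 < ∑ i, x i ^ 2 := by
    rwa [e2, Real.lt_sqrt hr] at hx
  have havg : ∑ _i : ι, r ^ 2 / Fintype.card ι ≤ r ^ 2 := by
    rw [sum_const, card_univ, nsmul_eq_mul]
    rcases (Nat.cast_nonneg (α := ℝ) (Fintype.card ι)).eq_or_lt with h | h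
    · rw [← h]; simp [sq_nonneg]
    · rw [mul_div_cancel₀ _ h.ne']
  obtain ⟨i, -, hi⟩ := exists_lt_of_sum_lt (havg.trans_lt hsq)
  refine ⟨i, lt_of_pow_lt_pow_left₀ 2 (abs_nonneg _) ?_⟩
  rwa [div_pow, Real.sq_sqrt (Nat.cast_nonneg _), sq_abs]

end e2

section sval

variable {ι κ : Type*} [Fintype ι] [Fintype κ]

lemma sval_card_eq_iInf (A : Matrix ι κ ℝ) :
    sval A (Fintype.card κ) = ⨅ x : {x : κ → ℝ // x ∈ (⊤ : Submodule ℝ (κ → ℝ)) ∧ e2 x = 1},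
      e2 (A *ᵥ x.1) := by
  have hV : ∀ V : {V : Submodule ℝ (κ → ℝ) // Module.finrank ℝ V = Fintype.card κ}, V.1 = ⊤ :=
    fun V => Submodule.eq_top_of_finrank_eq (by simp [V.2])
  have : Nonempty {V : Submodule ℝ (κ → ℝ) // Module.finrank ℝ V = Fintype.card κ} :=
    ⟨⟨⊤, by simp⟩⟩
  unfold sval
  conv_lhs => arg 1; ext V; rw [hV V]
  exact ciSup_const

lemma exists_e2_eq_one_e2_mulVec_le_sval [Nonempty κ] (A : Matrix ι κ ℝ) :
    ∃ α : κ → ℝ, e2 α = 1 ∧ e2 (A *ᵥ α) ≤ sval A (Fintype.card κ) := by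
  have hcont : Continuous fun v : EuclideanSpace ℝ κ => e2 (A *ᵥ v.ofLp) := by
    simp_rw [e2_eq_norm_toLp]
    fun_prop
  obtain ⟨v, hv, hmin⟩ := (isCompact_sphere (0 : EuclideanSpace ℝ κ) 1).exists_isMinOn
    (NormedSpace.sphere_nonempty.mpr zero_le_one) hcont.continuousOn
  have hunit : ∀ x : κ → ℝ, e2 x = 1 ↔ WithLp.toLp 2 x ∈ Metric.sphere 0 1 := by
    simp [e2_eq_norm_toLp]
  have hv1 : e2 v.ofLp = 1 := (hunit _).mpr hv
  refine ⟨v.ofLp, hv1, ?_⟩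
  have : Nonempty {x : κ → ℝ // x ∈ (⊤ : Submodule ℝ (κ → ℝ)) ∧ e2 x = 1} :=
    ⟨⟨v.ofLp, trivial, hv1⟩⟩
  rw [sval_card_eq_iInf]
  exact le_ciInf fun x => hmin ((hunit _).mp x.2.2)

lemma exists_sum_eq_zero_near_kernel [Nonempty κ] (A : Matrix ι κ ℝ) (i₀ : ι)
    (hi₀ : ∀ j, A i₀ j = 1) (hA : ∀ i j, |A i j| ≤ 1) :
    ∃ β : κ → ℝ, ∑ j, β j = 0 ∧ (∀ j, |β j| ≤ 1 + sval A (Fintype.card κ)) ∧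
      1 - sval A (Fintype.card κ) ≤ e2 β ∧ ∀ i, |(A *ᵥ β) i| ≤ 2 * sval A (Fintype.card κ) := by
  classical
  obtain ⟨α, hα1, hAα⟩ := exists_e2_eq_one_e2_mulVec_le_sval A
  set σ := sval A (Fintype.card κ)
  set s := ∑ j, α j
  have hAαi : ∀ i, |(A *ᵥ α) i| ≤ σ := fun i => (abs_le_e2 _ i).trans hAα
  have hs : |s| ≤ σ := by
    simpa [mulVec, dotProduct, hi₀] using hAαi i₀
  obtain ⟨j₀⟩ := ‹Nonempty κ›
  refine ⟨(α - Pi.single j₀ s : κ → ℝ), ?_, fun j => ?_, ?_, fun i => ?_⟩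
  · simp [sum_sub_distrib, s]
  · calc |(α - Pi.single j₀ s : κ → ℝ) j| ≤ |α j| + |(Pi.single j₀ s : κ → ℝ) j| := abs_sub _ _
      _ ≤ 1 + σ := by
        gcongr
        · exact hα1 ▸ abs_le_e2 α j
        · exact ((abs_le_e2 _ j).trans_eq (e2_single j₀ s)).trans hs
  · have := e2_sub_e2_le α (Pi.single j₀ s)
    rw [hα1, e2_single] at this
    linarith
  · have hAβ : (A *ᵥ (α - Pi.single j₀ s)) i = (A *ᵥ α) i - A i j₀ * s := by
      simp [mulVec_sub, mulVec_single, mul_comm]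
    calc |(A *ᵥ (α - Pi.single j₀ s)) i| ≤ |(A *ᵥ α) i| + |A i j₀| * |s| := by
          rw [hAβ, ← abs_mul]; exact abs_sub _ _
      _ ≤ σ + 1 * σ := by
        gcongr
        · exact hAαi i
        · exact hA i j₀
      _ = 2 * σ := by ring

end sval

lemma abs_hadamardExt_le_one {n k : ℕ} {m : Matrix (Fin n) (Fin k) ℝ} (hm : ∀ i j, |m i j| ≤ 1)
    (S : Finset (Fin n)) (j : Fin k) : |hadamardExt m S j| ≤ 1 := by
  rw [hadamardExt, of_apply, abs_prod]
  exact prod_le_one (fun i _ => abs_nonneg _) fun i _ => hm i j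

theorem stmt16_general (n k : ℕ) (hn : 1 ≤ n) (hk : 1 ≤ k) (ζ πmin ε : ℝ)
    (hε : 0 < ε)
    (hε1 : ε < πmin / (4 * Real.sqrt k)) (hε2 : ε < ζ)
    (π : Fin k → ℝ) (hπ0 : ∀ j, πmin ≤ π j) (hπ1 : ∑ j, π j = 1)
    (m : Matrix (Fin n) (Fin k) ℝ) (hm : ∀ i j, m i j ∈ Set.Icc (0 : ℝ) 1)
    (hsep : ∀ i, ∀ j j' : Fin k, j ≠ j' → ζ ≤ |m i j - m i j'|)
    (hσ : sval (hadamardExt m) k < 1 / 2) :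
    ∃ π' : Fin k → ℝ, (∑ j, π' j = 1) ∧ (∀ j, πmin / 4 ≤ π' j) ∧
      (∀ ρ : Equiv.Perm (Fin k),
        (∃ j, ε < |π j - π' (ρ j)|) ∨ (∃ i j, ε < |m i j - m i (ρ j)|)) ∧
      (∀ S : Finset (Fin n),
        |(hadamardExt m).mulVec π S - (hadamardExt m).mulVec π' S|
          ≤ 4 * k * sval (hadamardExt m) k * ε) := by
  have : Nonempty (Fin k) := ⟨⟨0, hk⟩⟩
  obtain ⟨β, hβsum, hβle, hβe2, hAβ⟩ := exists_sum_eq_zero_near_kernel (hadamardExt m) ∅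
    (by simp [hadamardExt]) (abs_hadamardExt_le_one fun i j => abs_le.mpr
      ⟨by linarith [(hm i j).1], (hm i j).2⟩)
  simp only [Fintype.card_fin] at hβle hβe2 hAβ
  set σ := sval (hadamardExt m) k
  have hσ0 : 0 ≤ σ := by linarith [abs_nonneg ((hadamardExt m *ᵥ β) ∅), hAβ ∅]
  have hkε : 4 * (√k * ε) < πmin := by
    rw [lt_div_iff₀ (by positivity)] at hε1
    linarith
  have hc : 0 < 2 * √k * ε := by positivity
  refine ⟨π + (2 * √k * ε) • β, ?_, fun j => ?_, fun ρ => ?_, fun S => ?_⟩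
  · simp [sum_add_distrib, ← mul_sum, hπ1, hβsum]
  · have := (abs_le.mp (hβle j)).1
    simp only [Pi.add_apply, Pi.smul_apply, smul_eq_mul]
    nlinarith [hπ0 j]
  · by_cases hρ : ρ = 1
    · left
      obtain ⟨j, hj⟩ :=
        exists_div_sqrt_card_lt_abs (by norm_num) (by linarith : (1 / 2 : ℝ) < e2 β)
      refine ⟨j, ?_⟩
      rw [Fintype.card_fin, div_div, div_lt_iff₀ (by positivity)] at hj
      simp only [hρ, Equiv.Perm.coe_one, id, Pi.add_apply, Pi.smul_apply, smul_eq_mul,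
        sub_add_cancel_left, abs_neg, abs_mul, abs_of_pos hc]
      nlinarith
    · right
      obtain ⟨j, hj⟩ : ∃ j, ρ j ≠ j := by
        by_contra! h
        exact hρ (Equiv.ext h)
      exact ⟨⟨0, hn⟩, j, hε2.trans_le (hsep _ _ _ hj.symm)⟩
  · rw [mulVec_add, mulVec_smul, Pi.add_apply, Pi.smul_apply, smul_eq_mul, sub_add_cancel_left,
      abs_neg, abs_mul, abs_of_pos hc]
    calc 2 * √k * ε * |(hadamardExt m *ᵥ β) S| ≤ 2 * √k * ε * (2 * σ) := by gcongr; exact hAβ S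
      _ = 4 * √k * σ * ε := by ring
      _ ≤ 4 * k * σ * ε := by
        gcongr
        exact Real.sqrt_le_self_iff.mpr (Or.inr (by exact_mod_cast hk))

/-- if σ = σ_k(H(m)) < 1/2, there is another mixing-weight vector
π' with entries ≥ π_min/4 such that the model distance (min over label
permutations of the max entrywise deviation) exceeds ε while the statistics
H(m)π and H(m)π' differ entrywise by at most 4kσε. -/
theorem stmt16 (n k : ℕ) (hn : 1 ≤ n) (hk : 1 ≤ k) (ζ πmin ε : ℝ)
    (hζ : 0 < ζ) (hπ : 0 < πmin) (hε : 0 < ε)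
    (hε1 : ε < πmin / (4 * Real.sqrt k)) (hε2 : ε < ζ)
    (π : Fin k → ℝ) (hπ0 : ∀ j, πmin ≤ π j) (hπ1 : ∑ j, π j = 1)
    (m : Matrix (Fin n) (Fin k) ℝ) (hm : ∀ i j, m i j ∈ Set.Icc (0 : ℝ) 1)
    (hsep : ∀ i, ∀ j j' : Fin k, j ≠ j' → ζ ≤ |m i j - m i j'|)
    (hσ : sval (hadamardExt m) k < 1 / 2) :
    ∃ π' : Fin k → ℝ, (∑ j, π' j = 1) ∧ (∀ j, πmin / 4 ≤ π' j) ∧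
      (∀ ρ : Equiv.Perm (Fin k),
        (∃ j, ε < |π j - π' (ρ j)|) ∨ (∃ i j, ε < |m i j - m i (ρ j)|)) ∧
      (∀ S : Finset (Fin n),
        |(hadamardExt m).mulVec π S - (hadamardExt m).mulVec π' S|
          ≤ 4 * k * sval (hadamardExt m) k * ε) :=
  stmt16_general n k hn hk ζ πmin ε hε hε1 hε2 π hπ0 hπ1 m hm hsep hσ
end
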